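/- arXiv:1208.1428 — 3 statements merged into one kernel-verified Lean document; each statement's English description precedes it below -/
import Mathlib

section
/- For every Schwartz function f: ℝ → ℂ and every k ∈ ℝ, the limit lim_{ε→0⁺} ∫_ℝ f(x) e^{ikx} / (x + iε) dx exists and equals −i ∫_k^∞ f̂(k′) dk′, where f̂(k) = ∫_ℝ f(x) e^{ikx} dx. Moreover, lim_{k→−∞} ∫_k^∞ f̂(k′) dk′ = 2π f(0). -/
/-!
For `ε > 0` write `e^{ikx}/(x + iε) = -i ∫_k^∞ e^{-ε(k' - k)} e^{ik'x} dk'`. Multiplying by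
`f(x)` and exchanging the integrals (the integrand is dominated by `|f(x)| e^{-ε(k' - k)}`) gives
`∫ f(x) e^{ikx}/(x + iε) dx = -i ∫_k^∞ e^{-ε(k' - k)} f̂(k') dk'`. Since `f̂` is again Schwartz,
hence integrable, dominated convergence lets `ε → 0⁺`, and lets `k → -∞` in `∫_k^∞ f̂`, whose
limit `∫ f̂ = 2π f(0)` is Fourier inversion at `0`.
-/

open Filter Topology Complex MeasureTheory Set FourierTransform

/-- The `f̂` of the header; Mathlib's `𝓕` uses the kernel `e^{-2πixw}` instead of `e^{ikx}`. -/
noncomputable def fourierAngular (f : ℝ → ℂ) (k : ℝ) : ℂ := ∫ x, f x * exp (I * k * x)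

lemma fourierAngular_eq_fourier (f : ℝ → ℂ) (k : ℝ) :
    fourierAngular f k = 𝓕 f (-(2 * Real.pi)⁻¹ * k) := by
  rw [Real.fourier_real_eq_integral_exp_smul, fourierAngular]
  congr 1 with x
  rw [smul_eq_mul, mul_comm]
  congr 2
  have : (Real.pi : ℂ) ≠ 0 := ofReal_ne_zero.2 Real.pi_ne_zero
  push_cast
  field_simp

namespace SchwartzMap

lemma integrable_fourierAngular (f : 𝓢(ℝ, ℂ)) : Integrable (fourierAngular f) := by
  have : Integrable (𝓕 (f : ℝ → ℂ)) := (𝓕 f).integrable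
  simpa only [Function.comp_def, ← fourierAngular_eq_fourier] using
    this.comp_mul_left' (R := -(2 * Real.pi)⁻¹) (by simp [Real.pi_ne_zero])

lemma integral_fourierAngular (f : 𝓢(ℝ, ℂ)) :
    ∫ k, fourierAngular f k = (2 * Real.pi : ℝ) * f 0 := by
  have hinv : ∫ w, 𝓕 (⇑f) w = f 0 := by
    have := congrFun (f.continuous.fourierInv_fourier_eq f.integrable (𝓕 f).integrable) 0
    simpa [Real.fourierInv_eq] using this
  simp_rw [fourierAngular_eq_fourier]
  rw [Measure.integral_comp_mul_left, hinv, abs_inv, abs_neg, abs_inv, inv_inv,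
    abs_of_pos Real.two_pi_pos, real_smul]

end SchwartzMap

lemma exp_div_ofReal_add_mul_I_eq_integral {ε : ℝ} (hε : 0 < ε) (k x : ℝ) :
    exp (I * k * x) / (x + ε * I) =
      -I * ∫ t in Ioi k, Real.exp (-ε * (t - k)) • exp (I * t * x) := by
  have hre : (I * x - ε).re < 0 := by simpa using hε
  have hne : (x : ℂ) + ε * I ≠ 0 := fun h => by simpa [hε.ne'] using congrArg im h
  have hne' : I * x - ε ≠ 0 := fun h => by simpa [hε.ne'] using congrArg re h
  have hintegrand : ∀ t : ℝ, Real.exp (-ε * (t - k)) • exp (I * t * x) =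
      exp (ε * k) * exp ((I * x - ε) * t) := by
    intro t
    rw [real_smul, ofReal_exp, ← exp_add, ← exp_add]
    push_cast
    ring_nf
  simp_rw [hintegrand]
  rw [integral_const_mul, integral_exp_mul_complex_Ioi hre, mul_div_assoc', mul_neg, ← exp_add,
    show (ε * k + (I * x - ε) * k : ℂ) = I * k * x by ring, neg_div, mul_neg, neg_mul, neg_neg,
    mul_div_assoc', div_eq_div_iff hne hne']
  linear_combination (-ε * exp (I * k * x)) * I_sq

lemma integral_mul_exp_div_ofReal_add_mul_I {f : ℝ → ℂ} (hf : Integrable f) {ε : ℝ}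
    (hε : 0 < ε) (k : ℝ) :
    ∫ x, f x * exp (I * k * x) / (x + ε * I) =
      -I * ∫ t in Ioi k, Real.exp (-ε * (t - k)) • fourierAngular f t := by
  have hdecay : IntegrableOn (fun t : ℝ => Real.exp (-ε * (t - k))) (Ioi k) := by
    refine IntegrableOn.congr_fun ((exp_neg_integrableOn_Ioi k hε).mul_const (Real.exp (ε * k)))
      (fun t _ => ?_) measurableSet_Ioi
    rw [← Real.exp_add]
    ring_nf
  have hprod : Integrable (Function.uncurry fun x t : ℝ =>
      f x * Real.exp (-ε * (t - k)) • exp (I * t * x))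
      (volume.prod (volume.restrict (Ioi k))) := by
    refine (hf.norm.mul_prod hdecay).mono' ?_ (ae_of_all _ fun p => ?_)
    · have hexp : Continuous fun p : ℝ × ℝ =>
          Real.exp (-ε * (p.2 - k)) • exp (I * p.2 * p.1) := by
        fun_prop
      exact hf.1.comp_fst.mul hexp.aestronglyMeasurable
    · simp [Function.uncurry, norm_exp]
  calc ∫ x, f x * exp (I * k * x) / (x + ε * I)
      = ∫ x, -I * ∫ t in Ioi k, f x * Real.exp (-ε * (t - k)) • exp (I * t * x) := by
        congr 1 with x
        rw [mul_div_assoc, exp_div_ofReal_add_mul_I_eq_integral hε, integral_const_mul]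
        ring
    _ = -I * ∫ t in Ioi k, ∫ x, f x * Real.exp (-ε * (t - k)) • exp (I * t * x) := by
        rw [integral_const_mul, integral_integral_swap hprod]
    _ = -I * ∫ t in Ioi k, Real.exp (-ε * (t - k)) • fourierAngular f t := by
        simp_rw [mul_smul_comm, integral_smul, fourierAngular]

lemma tendsto_setIntegral_Ioi_exp_neg_mul_smul {E : Type*} [NormedAddCommGroup E]
    [NormedSpace ℝ E] {h : ℝ → E} {a : ℝ} (hh : IntegrableOn h (Ioi a)) :
    Tendsto (fun ε => ∫ t in Ioi a, Real.exp (-ε * (t - a)) • h t) (𝓝[>] 0)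
      (𝓝 (∫ t in Ioi a, h t)) := by
  refine tendsto_integral_filter_of_dominated_convergence (fun t => ‖h t‖)
    (Eventually.of_forall fun ε => (Continuous.aestronglyMeasurable (by fun_prop)).smul hh.1)
    ?_ hh.norm (ae_of_all _ fun t => ?_)
  · filter_upwards [self_mem_nhdsWithin] with ε (hε : 0 < ε)
    filter_upwards [ae_restrict_mem measurableSet_Ioi] with t (ht : a < t)
    rw [norm_smul, Real.norm_of_nonneg (Real.exp_pos _).le]
    exact mul_le_of_le_one_left (norm_nonneg _)
      (Real.exp_le_one_iff.2 (by nlinarith [sub_pos.2 ht]))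
  · have : Tendsto (fun ε : ℝ => Real.exp (-ε * (t - a))) (𝓝[>] 0) (𝓝 1) := by
      simpa using ((by fun_prop : Continuous fun ε : ℝ => Real.exp (-ε * (t - a))).tendsto 0
        |>.mono_left nhdsWithin_le_nhds)
    simpa using this.smul_const (h t)

/-- The boundary value of `(x + iε)⁻¹`: for every Schwartz function `f` and
every `k ∈ ℝ`, `lim_{ε→0⁺} ∫ f(x) e^{ikx}/(x + iε) dx = −i ∫_k^∞ f̂(k′) dk′`
(with `f̂(k) = ∫ f(x) e^{ikx} dx`), and `lim_{k→−∞} ∫_k^∞ f̂(k′) dk′ = 2π f(0)`. -/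
theorem boundary_value_of_inv_x_plus_i_eps (f : SchwartzMap ℝ ℂ) :
    (∀ k : ℝ,
      Tendsto (fun ε : ℝ =>
          ∫ x : ℝ, f x * Complex.exp (Complex.I * k * x) / ((x : ℂ) + ε * Complex.I))
        (nhdsWithin 0 (Set.Ioi 0))
        (nhds (-Complex.I *
          ∫ k' in Set.Ioi k, ∫ x : ℝ, f x * Complex.exp (Complex.I * k' * x)))) ∧
    Tendsto (fun k : ℝ =>
        ∫ k' in Set.Ioi k, ∫ x : ℝ, f x * Complex.exp (Complex.I * k' * x))
      atBot (nhds ((2 * Real.pi : ℝ) * f 0)) := by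
  have hFf : Integrable (fourierAngular f) := f.integrable_fourierAngular
  refine ⟨fun k => ?_, ?_⟩
  · refine ((tendsto_setIntegral_Ioi_exp_neg_mul_smul hFf.integrableOn).const_mul (-I)).congr' ?_
    filter_upwards [self_mem_nhdsWithin] with ε hε
    exact (integral_mul_exp_div_ofReal_add_mul_I f.integrable hε k).symm
  · rw [← f.integral_fourierAngular]
    exact (aecover_Ioi tendsto_id).integral_tendsto_of_countably_generated hFf
end

section
/- Fix ℏ > 0. For α, β ∈ ℝ define the operator W(α,β) on L²(ℝ, ℂ) by (W(α,β)Φ)(x) = e^{iℏαβ/2} e^{iβx} Φ(x + ℏα). Then each W(α,β) is a unitary operator, W(0,0) is the identity, the Weyl relations W(α,β)W(α′,β′) = e^{(iℏ/2)(αβ′ − α′β)} W(α+α′, β+β′) hold for all α, β, α′, β′ ∈ ℝ, and the adjoint satisfies W(α,β)* = W(−α,−β). -/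
/-!
`W(α,β)` multiplies by a unimodular function after translating by `ℏα`, and translation preserves
Lebesgue measure, so it preserves the `L²` norm. Composing two of them, the translations add and
the phases combine to the cocycle `e^{(iℏ/2)(αβ′ − α′β)}` times the phase of `W(α+α′, β+β′)`;
hence `W(−α,−β)` is a two-sided inverse of `W(α,β)` and each `W(α,β)` is unitary.
-/

open MeasureTheory Complex

namespace SchroedingerWeyl

noncomputable def weylFun (ℏ α β : ℝ) (f : ℝ → ℂ) (x : ℝ) : ℂ :=
  exp (I * ℏ * α * β / 2) * exp (I * β * x) * f (x + ℏ * α)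

section Functions

variable (ℏ α β : ℝ)

lemma norm_weylFun (f : ℝ → ℂ) (x : ℝ) : ‖weylFun ℏ α β f x‖ = ‖f (x + ℏ * α)‖ := by
  simp [weylFun, norm_exp]

lemma weylFun_add (f g : ℝ → ℂ) : weylFun ℏ α β (f + g) = weylFun ℏ α β f + weylFun ℏ α β g := by
  funext x
  simp only [weylFun, Pi.add_apply]
  ring

lemma weylFun_smul (c : ℂ) (f : ℝ → ℂ) : weylFun ℏ α β (c • f) = c • weylFun ℏ α β f := by
  funext x
  simp only [weylFun, Pi.smul_apply, smul_eq_mul]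
  ring

lemma weylFun_zero_zero (f : ℝ → ℂ) : weylFun ℏ 0 0 f = f := by
  funext x
  simp [weylFun]

lemma weylFun_weylFun (α' β' : ℝ) (f : ℝ → ℂ) :
    weylFun ℏ α β (weylFun ℏ α' β' f) =
      exp (I * ℏ / 2 * (α * β' - α' * β)) • weylFun ℏ (α + α') (β + β') f := by
  funext x
  have hshift : x + ℏ * α + ℏ * α' = x + ℏ * (α + α') := by ring
  have hphase : exp (I * ℏ * α * β / 2) * exp (I * β * x) *
        (exp (I * ℏ * α' * β' / 2) * exp (I * β' * (x + ℏ * α))) =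
      exp (I * ℏ / 2 * (α * β' - α' * β)) *
        (exp (I * ℏ * (α + α') * (β + β') / 2) * exp (I * (β + β') * x)) := by
    simp only [← exp_add]
    congr 1
    ring
  simp only [weylFun, Pi.smul_apply, smul_eq_mul, hshift]
  push_cast
  linear_combination f (x + ℏ * (α + α')) * hphase

lemma EventuallyEq.weylFun {f f' : ℝ → ℂ} (h : f =ᵐ[volume] f') :
    weylFun ℏ α β f =ᵐ[volume] weylFun ℏ α β f' := by
  have hshift : (fun x => f (x + ℏ * α)) =ᵐ[volume] fun x => f' (x + ℏ * α) :=
    h.comp_tendsto (measurePreserving_add_right volume (ℏ * α)).quasiMeasurePreserving.tendsto_ae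
  filter_upwards [hshift] with x hx
  simp only [SchroedingerWeyl.weylFun, hx]

lemma eLpNorm_weylFun {f : ℝ → ℂ} (hf : AEStronglyMeasurable f volume) :
    eLpNorm (weylFun ℏ α β f) 2 volume = eLpNorm f 2 volume := by
  rw [eLpNorm_congr_norm_ae (ae_of_all _ (norm_weylFun ℏ α β f))]
  exact eLpNorm_comp_measurePreserving hf (measurePreserving_add_right volume (ℏ * α))

lemma MemLp.weylFun {f : ℝ → ℂ} (hf : MemLp f 2 volume) :
    MemLp (weylFun ℏ α β f) 2 volume := by
  have hshift : MemLp (fun x => f (x + ℏ * α)) 2 volume :=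
    hf.comp_measurePreserving (measurePreserving_add_right volume (ℏ * α))
  have hphase : Continuous fun x : ℝ => exp (I * ℏ * α * β / 2) * exp (I * β * x) := by
    fun_prop
  refine ⟨hphase.aestronglyMeasurable.mul hshift.1, ?_⟩
  rw [eLpNorm_weylFun ℏ α β hf.1]
  exact hf.2

end Functions

local notation "L²" => Lp ℂ 2 (volume : Measure ℝ)

section Operators

variable (ℏ α β : ℝ)

noncomputable def weylLp (Φ : L²) : L² :=
  (MemLp.weylFun ℏ α β (Lp.memLp Φ)).toLp _

lemma coeFn_weylLp (Φ : L²) : ⇑(weylLp ℏ α β Φ) =ᵐ[volume] weylFun ℏ α β Φ :=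
  MemLp.coeFn_toLp _

lemma norm_weylLp (Φ : L²) : ‖weylLp ℏ α β Φ‖ = ‖Φ‖ := by
  rw [weylLp, Lp.norm_toLp, eLpNorm_weylFun ℏ α β (Lp.aestronglyMeasurable Φ), Lp.norm_def]

lemma weylLp_add (Φ Ψ : L²) : weylLp ℏ α β (Φ + Ψ) = weylLp ℏ α β Φ + weylLp ℏ α β Ψ := by
  apply Lp.ext
  filter_upwards [coeFn_weylLp ℏ α β (Φ + Ψ), EventuallyEq.weylFun ℏ α β (Lp.coeFn_add Φ Ψ),
    Lp.coeFn_add (weylLp ℏ α β Φ) (weylLp ℏ α β Ψ), coeFn_weylLp ℏ α β Φ,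
    coeFn_weylLp ℏ α β Ψ] with x h₁ h₂ h₃ h₄ h₅
  rw [h₁, h₂, weylFun_add, h₃, Pi.add_apply, Pi.add_apply, h₄, h₅]

lemma weylLp_smul (c : ℂ) (Φ : L²) : weylLp ℏ α β (c • Φ) = c • weylLp ℏ α β Φ := by
  apply Lp.ext
  filter_upwards [coeFn_weylLp ℏ α β (c • Φ), EventuallyEq.weylFun ℏ α β (Lp.coeFn_smul c Φ),
    Lp.coeFn_smul c (weylLp ℏ α β Φ), coeFn_weylLp ℏ α β Φ] with x h₁ h₂ h₃ h₄
  rw [h₁, h₂, weylFun_smul, h₃, Pi.smul_apply, Pi.smul_apply, h₄]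

lemma weylLp_zero_zero (Φ : L²) : weylLp ℏ 0 0 Φ = Φ := by
  apply Lp.ext
  simpa only [weylFun_zero_zero] using coeFn_weylLp ℏ 0 0 Φ

lemma weylLp_weylLp (α' β' : ℝ) (Φ : L²) :
    weylLp ℏ α β (weylLp ℏ α' β' Φ) =
      exp (I * ℏ / 2 * (α * β' - α' * β)) • weylLp ℏ (α + α') (β + β') Φ := by
  apply Lp.ext
  filter_upwards [coeFn_weylLp ℏ α β (weylLp ℏ α' β' Φ),
    EventuallyEq.weylFun ℏ α β (coeFn_weylLp ℏ α' β' Φ),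
    Lp.coeFn_smul (exp (I * ℏ / 2 * (α * β' - α' * β))) (weylLp ℏ (α + α') (β + β') Φ),
    coeFn_weylLp ℏ (α + α') (β + β') Φ] with x h₁ h₂ h₃ h₄
  rw [h₁, h₂, weylFun_weylFun, h₃, Pi.smul_apply, Pi.smul_apply, h₄]

lemma weylLp_neg_weylLp (Φ : L²) : weylLp ℏ (-α) (-β) (weylLp ℏ α β Φ) = Φ := by
  simp [weylLp_weylLp, weylLp_zero_zero]

noncomputable def weyl : L² ≃ₗᵢ[ℂ] L² where
  toFun := weylLp ℏ α β
  invFun := weylLp ℏ (-α) (-β)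
  map_add' := weylLp_add ℏ α β
  map_smul' := weylLp_smul ℏ α β
  left_inv := weylLp_neg_weylLp ℏ α β
  right_inv Φ := by simpa using weylLp_neg_weylLp ℏ (-α) (-β) Φ
  norm_map' := norm_weylLp ℏ α β

end Operators

end SchroedingerWeyl

open SchroedingerWeyl in
theorem weyl_operators_schroedinger_representation_general (ℏ : ℝ) :
    ∃ W : ℝ → ℝ → (Lp ℂ 2 (volume : Measure ℝ) ≃ₗᵢ[ℂ] Lp ℂ 2 (volume : Measure ℝ)),
      (∀ (α β : ℝ) (Φ : Lp ℂ 2 (volume : Measure ℝ)),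
        ⇑(W α β Φ) =ᵐ[volume] fun x : ℝ =>
          Complex.exp (Complex.I * ℏ * α * β / 2) * Complex.exp (Complex.I * β * x) *
            Φ (x + ℏ * α)) ∧
      W 0 0 = LinearIsometryEquiv.refl ℂ (Lp ℂ 2 (volume : Measure ℝ)) ∧
      (∀ (α β α' β' : ℝ) (Φ : Lp ℂ 2 (volume : Measure ℝ)),
        W α β (W α' β' Φ) =
          Complex.exp (Complex.I * ℏ / 2 * (α * β' - α' * β)) •
            W (α + α') (β + β') Φ) ∧
      (∀ α β : ℝ, (W α β).symm = W (-α) (-β)) :=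
  ⟨weyl ℏ, coeFn_weylLp ℏ, LinearIsometryEquiv.ext (weylLp_zero_zero ℏ), weylLp_weylLp ℏ,
    fun _ _ => LinearIsometryEquiv.ext fun _ => rfl⟩

/-- **The Schrödinger representation of the Weyl relations.** Fix `ℏ > 0`.
The operators `(W(α,β)Φ)(x) = e^{iℏαβ/2} e^{iβx} Φ(x + ℏα)` on `L²(ℝ, ℂ)` are
unitary (linear isometric bijections), `W(0,0) = 1`, they satisfy the Weyl
relations `W(α,β)W(α′,β′) = e^{(iℏ/2)(αβ′ − α′β)} W(α+α′, β+β′)`, and the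
adjoint (= inverse) satisfies `W(α,β)* = W(−α,−β)`. -/
theorem weyl_operators_schroedinger_representation (ℏ : ℝ) (hℏ : 0 < ℏ) :
    ∃ W : ℝ → ℝ → (Lp ℂ 2 (volume : Measure ℝ) ≃ₗᵢ[ℂ] Lp ℂ 2 (volume : Measure ℝ)),
      (∀ (α β : ℝ) (Φ : Lp ℂ 2 (volume : Measure ℝ)),
        ⇑(W α β Φ) =ᵐ[volume] fun x : ℝ =>
          Complex.exp (Complex.I * ℏ * α * β / 2) * Complex.exp (Complex.I * β * x) *
            Φ (x + ℏ * α)) ∧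
      W 0 0 = LinearIsometryEquiv.refl ℂ (Lp ℂ 2 (volume : Measure ℝ)) ∧
      (∀ (α β α' β' : ℝ) (Φ : Lp ℂ 2 (volume : Measure ℝ)),
        W α β (W α' β' Φ) =
          Complex.exp (Complex.I * ℏ / 2 * (α * β' - α' * β)) •
            W (α + α') (β + β') Φ) ∧
      (∀ α β : ℝ, (W α β).symm = W (-α) (-β)) :=
  weyl_operators_schroedinger_representation_general ℏ
end

section
/- The scaling degree increases at most by the order of differentiation: for every tempered distribution t on ℝⁿ and every multi-index α ∈ ℕ₀ⁿ, one has sd(∂^α t) ≤ sd(t) + |α|; more generally, for any constant-coefficient partial differential operator p(∂) of degree |p|, sd(p(∂) t) ≤ sd(t) + |p|. -/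
open Filter Topology

/-- Dilation of a Schwartz function: `(dilate n lam f) x = f (lam⁻¹ • x)` for
`lam ≠ 0` (and `f` itself for `lam = 0`), i.e. formally `x ↦ f (x / lam)`. -/
noncomputable def dilate (n : ℕ) (lam : ℝ) (f : SchwartzMap (Fin n → ℝ) ℂ) :
    SchwartzMap (Fin n → ℝ) ℂ :=
  if h : lam = 0 then f
  else
    SchwartzMap.compCLMOfContinuousLinearEquiv ℝ
      ((LinearEquiv.smulOfNeZero ℝ (Fin n → ℝ) lam⁻¹
        (inv_ne_zero h)).toContinuousLinearEquiv) f

/-- The set of candidate scaling degrees `δ` of a (not necessarily continuous)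
functional `T` on Schwartz space: those `δ` with `λ^δ · T_λ → 0` weakly as
`λ → 0⁺`, where `⟨T_λ, f⟩ = λ^{-n} ⟨T, f(·/λ)⟩`.  The scaling degree `sd(T)`
is the infimum of this set; `sd(T) ≤ d` iff every `δ > d` lies in it. -/
noncomputable def sdSetF (n : ℕ) (T : SchwartzMap (Fin n → ℝ) ℂ → ℂ) :
    Set ℝ :=
  {δ : ℝ | ∀ f : SchwartzMap (Fin n → ℝ) ℂ,
    Tendsto (fun lam : ℝ =>
        ((lam ^ δ * lam ^ (-(n : ℝ)) : ℝ) : ℂ) * T (dilate n lam f))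
      (nhdsWithin 0 (Set.Ioi 0)) (nhds 0)}

/-- The multi-index derivative `∂^α` on Schwartz space: for each `j`,
differentiate `α j` times in the `j`-th coordinate direction. -/
noncomputable def schwartzMDeriv {n : ℕ} (α : Fin n → ℕ)
    (f : SchwartzMap (Fin n → ℝ) ℂ) : SchwartzMap (Fin n → ℝ) ℂ :=
  (List.finRange n).foldr
    (fun j g => (fun h => SchwartzMap.evalCLM ℝ (Fin n → ℝ) ℂ (Pi.single j 1) (SchwartzMap.fderivCLM ℝ (Fin n → ℝ) ℂ h))^[α j] g) f

/-- The finite set of multi-indices `α` with `|α| = Σⱼ αⱼ ≤ m`. -/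
noncomputable def multiIndices (n m : ℕ) : Finset (Fin n → ℕ) :=
  (Fintype.piFinset fun _ : Fin n => Finset.range (m + 1)).filter
    fun α => (∑ j, α j) ≤ m

/-! Differentiation is homogeneous of degree `-1` under dilations:
`∂_v (f(·/λ)) = λ⁻¹ (∂_v f)(·/λ)`, hence `∂^α (f(·/λ)) = λ^{-|α|} (∂^α f)(·/λ)`. Consequently
`λ^δ ⟨(∂^α t)_λ, f⟩ = ± λ^{δ - |α|} ⟨t_λ, ∂^α f⟩`, which tends to `0` as soon as `δ - |α| > sd(t)`.
A constant-coefficient operator of order `≤ m` is handled term by term. -/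

open LineDeriv

section Homogeneity

variable {R M ι : Type*} [Monoid R] [MulAction R M]

theorem iterate_apply_of_apply_eq_smul {L D : M → M} {c : R}
    (hLD : ∀ x, L (D x) = c • D (L x)) (hL : ∀ (r : R) x, L (r • x) = r • L x) (k : ℕ) (x : M) :
    L^[k] (D x) = c ^ k • D (L^[k] x) := by
  induction k with
  | zero => simp
  | succ k ih =>
    rw [Function.iterate_succ_apply', Function.iterate_succ_apply', ih, hL, hLD, smul_smul,
      pow_succ]

theorem foldr_iterate_apply_of_apply_eq_smul {L : ι → M → M} {D : M → M} {c : R}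
    (hLD : ∀ i x, L i (D x) = c • D (L i x)) (hL : ∀ i (r : R) x, L i (r • x) = r • L i x)
    (α : ι → ℕ) (l : List ι) (x : M) :
    l.foldr (fun i y => (L i)^[α i] y) (D x) =
      c ^ (l.map α).sum • D (l.foldr (fun i y => (L i)^[α i] y) x) := by
  induction l with
  | nil => simp
  | cons i l ih =>
    have hLk : ∀ (r : R) y, (L i)^[α i] (r • y) = r • (L i)^[α i] y := fun r y =>
      Function.Commute.iterate_left (fun y => hL i r y) (α i) y
    simp only [List.foldr_cons, List.map_cons, List.sum_cons, ih, hLk,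
      iterate_apply_of_apply_eq_smul (hLD i) (hL i), smul_smul, pow_add, pow_mul_comm]

end Homogeneity

section Dilation

variable {n : ℕ}

theorem dilate_of_ne_zero {lam : ℝ} (hlam : lam ≠ 0) (f : SchwartzMap (Fin n → ℝ) ℂ) :
    dilate n lam f = SchwartzMap.compCLMOfContinuousLinearEquiv ℝ
      ((LinearEquiv.smulOfNeZero ℝ (Fin n → ℝ) lam⁻¹
        (inv_ne_zero hlam)).toContinuousLinearEquiv) f :=
  dif_neg hlam

theorem lineDerivOp_dilate {lam : ℝ} (hlam : lam ≠ 0) (v : Fin n → ℝ)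
    (f : SchwartzMap (Fin n → ℝ) ℂ) :
    ∂_{v} (dilate n lam f) = lam⁻¹ • dilate n lam (∂_{v} f) := by
  rw [dilate_of_ne_zero hlam, SchwartzMap.lineDerivOp_compCLMOfContinuousLinearEquiv]
  simp [lineDerivOp_left_smul, dilate_of_ne_zero hlam]

theorem schwartzMDeriv_eq_foldr (α : Fin n → ℕ) (f : SchwartzMap (Fin n → ℝ) ℂ) :
    schwartzMDeriv α f =
      (List.finRange n).foldr (fun j g => (∂_{(Pi.single j 1 : Fin n → ℝ)} ·)^[α j] g) f :=
  rfl

theorem schwartzMDeriv_dilate {lam : ℝ} (hlam : lam ≠ 0) (α : Fin n → ℕ)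
    (f : SchwartzMap (Fin n → ℝ) ℂ) :
    schwartzMDeriv α (dilate n lam f) = lam⁻¹ ^ (∑ j, α j) • dilate n lam (schwartzMDeriv α f) := by
  rw [schwartzMDeriv_eq_foldr, schwartzMDeriv_eq_foldr, Fin.sum_univ_def]
  exact foldr_iterate_apply_of_apply_eq_smul (fun j => lineDerivOp_dilate hlam _)
    (fun j r g => lineDerivOp_smul _ r g) α _ f

end Dilation

section ScalingDegree

variable {n : ℕ} {δ : ℝ}

theorem mem_sdSetF_const_mul {T : SchwartzMap (Fin n → ℝ) ℂ → ℂ} (c : ℂ) (hT : δ ∈ sdSetF n T) :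
    δ ∈ sdSetF n fun f => c * T f := fun f => by
  simpa [mul_left_comm] using (hT f).const_mul c

theorem mem_sdSetF_sum {ι : Type*} (s : Finset ι) (c : ι → ℂ)
    {T : ι → SchwartzMap (Fin n → ℝ) ℂ → ℂ} (hT : ∀ i ∈ s, δ ∈ sdSetF n (T i)) :
    δ ∈ sdSetF n fun f => ∑ i ∈ s, c i * T i f := fun f => by
  simp_rw [Finset.mul_sum]
  simpa using tendsto_finsetSum s fun i hi => mem_sdSetF_const_mul (c i) (hT i hi) f

theorem mem_sdSetF_schwartzMDeriv (T : SchwartzMap (Fin n → ℝ) ℂ →ₗ[ℂ] ℂ) (α : Fin n → ℕ)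
    (hT : δ - (∑ j, α j : ℕ) ∈ sdSetF n T) :
    δ ∈ sdSetF n fun f => T (schwartzMDeriv α f) := fun f => by
  refine (hT (schwartzMDeriv α f)).congr' ?_
  filter_upwards [self_mem_nhdsWithin] with lam (hlam : 0 < lam)
  rw [schwartzMDeriv_dilate hlam.ne', T.map_smul_of_tower, Complex.real_smul,
    Real.rpow_sub hlam, Real.rpow_natCast]
  push_cast
  rw [inv_pow, div_eq_mul_inv]
  ring

end ScalingDegree

/-- **The scaling degree increases at most by the order of differentiation.**
For a tempered distribution `t` on `ℝⁿ` and a multi-index `α`, one has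
`sd(∂^α t) ≤ sd(t) + |α|` (phrased via upper bounds for the scaling degree:
any upper bound `d` for `sd(t)` yields the upper bound `d + |α|` for
`sd(∂^α t)`, where `⟨∂^α t, f⟩ = (−1)^{|α|}⟨t, ∂^α f⟩`); more generally, for
any constant-coefficient partial differential operator `p(∂)` of degree `≤ m`,
`sd(p(∂)t) ≤ sd(t) + m`. -/
theorem scaling_degree_of_derivative (n : ℕ)
    (t : SchwartzMap (Fin n → ℝ) ℂ →L[ℂ] ℂ) :
    (∀ (α : Fin n → ℕ) (d : ℝ),
      (∀ δ : ℝ, d < δ → δ ∈ sdSetF n fun f => t f) →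
      (∀ δ : ℝ, d + (∑ j, α j : ℕ) < δ →
        δ ∈ sdSetF n fun f =>
          (-1 : ℂ) ^ (∑ j, α j) * t (schwartzMDeriv α f))) ∧
    (∀ (m : ℕ) (c : (Fin n → ℕ) → ℂ) (d : ℝ),
      (∀ δ : ℝ, d < δ → δ ∈ sdSetF n fun f => t f) →
      (∀ δ : ℝ, d + m < δ →
        δ ∈ sdSetF n fun f => ∑ α ∈ multiIndices n m,
          c α * ((-1 : ℂ) ^ (∑ j, α j) * t (schwartzMDeriv α f)))) := by
  have sd_deriv : ∀ (α : Fin n → ℕ) (d : ℝ), (∀ δ : ℝ, d < δ → δ ∈ sdSetF n fun f => t f) →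
      ∀ δ : ℝ, d + (∑ j, α j : ℕ) < δ →
        δ ∈ sdSetF n fun f => (-1 : ℂ) ^ (∑ j, α j) * t (schwartzMDeriv α f) :=
    fun α d hsd δ hδ => mem_sdSetF_const_mul _
      (mem_sdSetF_schwartzMDeriv t.toLinearMap α (hsd _ (by linarith)))
  refine ⟨sd_deriv, fun m c d hsd δ hδ => mem_sdSetF_sum _ c fun α hα => sd_deriv α d hsd δ ?_⟩
  have hαm : ((∑ j, α j : ℕ) : ℝ) ≤ m := by exact_mod_cast (Finset.mem_filter.mp hα).2
  linarith
end
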